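/- arXiv:2506.11401 — 5 statements merged into one kernel-verified Lean document; each statement's English description precedes it below -/
import Mathlib

section
/- If $(A - \lambda I_n)^\ell u = 0$ and $(B - \mu I_m)^k v = 0$ for vectors $u \in \mathbb{C}^n$, $v \in \mathbb{C}^m$, then $(A\otimes I_m + I_n\otimes B - (\lambda+\mu) I_{nm})^{\ell+k}(u\otimes v) = 0$, i.e., $u\otimes v$ is a generalized eigenvector of $A\otimes I_m + I_n\otimes B$ for the eigenvalue $\lambda+\mu$. -/
/-! `A ⊗ I + I ⊗ B - (λ + μ) I` is the sum of the commuting operators `(A - λ I) ⊗ I` and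
`I ⊗ (B - μ I)`, which kill `u ⊗ v` after `ℓ` and `k` steps respectively; by the binomial theorem
their sum kills it after `ℓ + k` steps. -/

open Kronecker Matrix Module.End

namespace Matrix

variable {R ι κ : Type*}

theorem kronecker_mulVec_kronecker [CommSemiring R] [Fintype ι] [Fintype κ]
    (X : Matrix ι ι R) (Y : Matrix κ κ R) (u : ι → R) (v : κ → R) :
    (X ⊗ₖ Y) *ᵥ (fun p => u p.1 * v p.2) = fun p => (X *ᵥ u) p.1 * (Y *ᵥ v) p.2 := by
  ext p
  simp only [mulVec, dotProduct, kroneckerMap_apply, Fintype.sum_prod_type, Finset.sum_mul_sum]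
  exact Finset.sum_congr rfl fun i _ => Finset.sum_congr rfl fun j _ => by ring

theorem kronecker_one_pow [CommSemiring R] [Fintype ι] [Fintype κ] [DecidableEq ι] [DecidableEq κ]
    (X : Matrix ι ι R) (i : ℕ) :
    (X ⊗ₖ (1 : Matrix κ κ R)) ^ i = (X ^ i) ⊗ₖ 1 := by
  induction i with
  | zero => rw [pow_zero, pow_zero, one_kronecker_one]
  | succ i ih => rw [pow_succ, pow_succ, ih, ← mul_kronecker_mul, one_mul]

theorem one_kronecker_pow [CommSemiring R] [Fintype ι] [Fintype κ] [DecidableEq ι] [DecidableEq κ]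
    (Y : Matrix κ κ R) (i : ℕ) :
    ((1 : Matrix ι ι R) ⊗ₖ Y) ^ i = 1 ⊗ₖ (Y ^ i) := by
  induction i with
  | zero => rw [pow_zero, pow_zero, one_kronecker_one]
  | succ i ih => rw [pow_succ, pow_succ, ih, ← mul_kronecker_mul, one_mul]

theorem kronecker_one_sub_smul_one [CommRing R] [DecidableEq ι] [DecidableEq κ]
    (X : Matrix ι ι R) (c : R) :
    X ⊗ₖ (1 : Matrix κ κ R) - c • 1 = (X - c • 1) ⊗ₖ 1 := by
  rw [sub_eq_add_neg, sub_eq_add_neg, add_kronecker, ← neg_smul, ← neg_smul, smul_kronecker,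
    one_kronecker_one]

theorem one_kronecker_sub_smul_one [CommRing R] [DecidableEq ι] [DecidableEq κ]
    (Y : Matrix κ κ R) (c : R) :
    (1 : Matrix ι ι R) ⊗ₖ Y - c • 1 = 1 ⊗ₖ (Y - c • 1) := by
  rw [sub_eq_add_neg, sub_eq_add_neg, kronecker_add, ← neg_smul, ← neg_smul, kronecker_smul,
    one_kronecker_one]

theorem commute_kronecker_one_one_kronecker [CommSemiring R] [Fintype ι] [Fintype κ]
    [DecidableEq ι] [DecidableEq κ] (X : Matrix ι ι R) (Y : Matrix κ κ R) :
    Commute (X ⊗ₖ (1 : Matrix κ κ R)) ((1 : Matrix ι ι R) ⊗ₖ Y) := by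
  simp only [Commute, SemiconjBy, ← mul_kronecker_mul, one_mul, mul_one]

theorem mem_genEigenspace_toLinAlgEquiv' [CommRing R] [Fintype ι] [DecidableEq ι]
    {X : Matrix ι ι R} {μ : R} {k : ℕ} {w : ι → R} :
    w ∈ genEigenspace (toLinAlgEquiv' X) μ k ↔ (X - μ • 1) ^ k *ᵥ w = 0 := by
  rw [mem_genEigenspace_nat, LinearMap.mem_ker, ← map_one toLinAlgEquiv', ← map_smul,
    ← map_sub, ← map_pow, toLinAlgEquiv'_apply]

theorem kronecker_mem_genEigenspace_kronecker_one [CommRing R] [Fintype ι] [Fintype κ]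
    [DecidableEq ι] [DecidableEq κ] {X : Matrix ι ι R} {μ : R} {k : ℕ}
    {u : ι → R} (hu : u ∈ genEigenspace (toLinAlgEquiv' X) μ k) (v : κ → R) :
    (fun p => u p.1 * v p.2) ∈ genEigenspace (toLinAlgEquiv' (X ⊗ₖ (1 : Matrix κ κ R))) μ k := by
  rw [mem_genEigenspace_toLinAlgEquiv'] at hu ⊢
  rw [kronecker_one_sub_smul_one, kronecker_one_pow, kronecker_mulVec_kronecker, hu]
  ext
  simp

theorem kronecker_mem_genEigenspace_one_kronecker [CommRing R] [Fintype ι] [Fintype κ]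
    [DecidableEq ι] [DecidableEq κ] {Y : Matrix κ κ R} {μ : R} {k : ℕ}
    (u : ι → R) {v : κ → R} (hv : v ∈ genEigenspace (toLinAlgEquiv' Y) μ k) :
    (fun p => u p.1 * v p.2) ∈ genEigenspace (toLinAlgEquiv' ((1 : Matrix ι ι R) ⊗ₖ Y)) μ k := by
  rw [mem_genEigenspace_toLinAlgEquiv'] at hv ⊢
  rw [one_kronecker_sub_smul_one, one_kronecker_pow, kronecker_mulVec_kronecker, hv]
  ext
  simp

end Matrix

/-- If `(A - λI)^ℓ u = 0` and `(B - μI)^k v = 0`, then `u ⊗ v` is a generalized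
eigenvector of `A ⊗ I + I ⊗ B` for the eigenvalue `λ + μ`:
`(A ⊗ I + I ⊗ B - (λ+μ)I)^(ℓ+k) (u ⊗ v) = 0`. -/
theorem kronecker_sum_generalized_eigenvector (n m : ℕ)
    (A : Matrix (Fin n) (Fin n) ℂ) (B : Matrix (Fin m) (Fin m) ℂ)
    (lam mu : ℂ) (ℓ k : ℕ) (u : Fin n → ℂ) (v : Fin m → ℂ)
    (hu : ((A - lam • (1 : Matrix (Fin n) (Fin n) ℂ)) ^ ℓ).mulVec u = 0)
    (hv : ((B - mu • (1 : Matrix (Fin m) (Fin m) ℂ)) ^ k).mulVec v = 0) :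
    (((A ⊗ₖ (1 : Matrix (Fin m) (Fin m) ℂ) + (1 : Matrix (Fin n) (Fin n) ℂ) ⊗ₖ B)
        - (lam + mu) • (1 : Matrix (Fin n × Fin m) (Fin n × Fin m) ℂ)) ^ (ℓ + k)).mulVec
      (fun p => u p.1 * v p.2) = 0 := by
  have hA := kronecker_mem_genEigenspace_kronecker_one (κ := Fin m)
    (mem_genEigenspace_toLinAlgEquiv'.2 hu) v
  have hB := kronecker_mem_genEigenspace_one_kronecker (ι := Fin n) u
    (mem_genEigenspace_toLinAlgEquiv'.2 hv)
  have hsum := genEigenspace_inf_le_add _ _ lam mu ℓ k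
    ((commute_kronecker_one_one_kronecker A B).map toLinAlgEquiv') ⟨hA, hB⟩
  rwa [← map_add, ← Nat.cast_add, mem_genEigenspace_toLinAlgEquiv'] at hsum
end

section
/- For any graph $G$ of order $n$, $\rho(G) + \rho(\overline{G}) < \sqrt{2}(n-1)$, where $\rho$ denotes the adjacency spectral radius and $\overline{G}$ the complement graph. -/
/-- The spectral radius of a real square matrix: the maximum modulus of its
complex eigenvalues (roots of the characteristic polynomial over `ℂ`). -/
noncomputable def specRad {n : ℕ} (A : Matrix (Fin n) (Fin n) ℝ) : ℝ :=
  sSup {x : ℝ | ∃ μ : ℂ, (A.map Complex.ofReal).charpoly.IsRoot μ ∧ x = ‖μ‖}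

/-!
The eigenvalues of a graph with `m` edges sum to `0` and their squares sum to `2m`, so by
Cauchy–Schwarz every eigenvalue `λ` satisfies `n λ² ≤ (n - 1) 2m`. Since `G` and `Ḡ` have
`n (n - 1) / 2` edges together, `ρ(G)² + ρ(Ḡ)² ≤ (n - 1)²`, whence `ρ(G) + ρ(Ḡ) ≤ √2 (n - 1)`.
Equality would force both graphs to have `n (n - 1) / 4` edges and `ρ(G) = (n - 1) / √2`. This
eigenvalue is irrational with rational square, so its Galois conjugate `-ρ(G)` is an eigenvalue
too. Then `2ρ(G)² = (n - 1)²` is at most the sum `n (n - 1) / 2` of all squared eigenvalues,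
which leaves only `n = 2`, where the edge count `1/2` is absurd.
-/

open Polynomial Matrix Finset

theorem card_mul_sq_le_of_sum_eq_zero {ι : Type*} [Fintype ι] {e : ι → ℝ}
    (he : ∑ j, e j = 0) (i : ι) :
    Fintype.card ι * e i ^ 2 ≤ (Fintype.card ι - 1) * ∑ j, e j ^ 2 := by
  classical
  have hrest : ∑ j ∈ univ.erase i, e j = -e i := by
    rw [← sum_erase_add _ _ (mem_univ i)] at he
    linarith
  have hcs := sq_sum_le_card_mul_sum_sq (s := univ.erase i) (f := e)
  rw [hrest, card_erase_of_mem (mem_univ i), card_univ,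
    Nat.cast_pred (Fintype.card_pos_iff.2 ⟨i⟩)] at hcs
  rw [← sum_erase_add _ _ (mem_univ i)]
  nlinarith

theorem irrational_of_sq_eq_two_mul_sq {x : ℝ} {q : ℚ} (hq : q ≠ 0) (hx : x ^ 2 = 2 * q ^ 2) :
    Irrational x := by
  have hirr : Irrational (√2 * q) := irrational_sqrt_two.mul_ratCast hq
  have hsq : x ^ 2 = (√2 * q) ^ 2 := by rw [hx, mul_pow, Real.sq_sqrt zero_le_two]
  rcases sq_eq_sq_iff_eq_or_eq_neg.1 hsq with h | h
  · exact h ▸ hirr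
  · exact h ▸ hirr.neg

theorem aeval_neg_eq_zero_of_irrational_of_sq_eq {p : ℚ[X]} {x : ℝ} {c : ℚ}
    (hx : Irrational x) (hxc : x ^ 2 = c) (hp : aeval x p = 0) : aeval (-x) p = 0 := by
  have hirr : Irreducible (X ^ 2 - C c) := by
    refine X_pow_sub_C_irreducible_of_prime Nat.prime_two fun b hb => ?_
    rcases sq_eq_sq_iff_eq_or_eq_neg.1 (hxc.trans (by rw [← hb]; push_cast; rfl)) with h | h
    · exact hx ⟨b, h.symm⟩
    · exact hx ⟨-b, by rw [h]; push_cast; rfl⟩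
  have hmin : X ^ 2 - C c = minpoly ℚ x :=
    minpoly.eq_of_irreducible_of_monic hirr (by simp [hxc]) (monic_X_pow_sub_C c two_ne_zero)
  obtain ⟨q, rfl⟩ := minpoly.dvd ℚ x hp
  simp [← hmin, hxc]

theorem specRad_nonneg {n : ℕ} (A : Matrix (Fin n) (Fin n) ℝ) : 0 ≤ specRad A :=
  Real.sSup_nonneg fun _ ⟨μ, _, hx⟩ => hx ▸ norm_nonneg μ

namespace Matrix.IsHermitian

section

variable {ι : Type*} [Fintype ι] [DecidableEq ι]

theorem trace_mul_self_eq_sum_sq_eigenvalues {𝕜 : Type*} [RCLike 𝕜] {A : Matrix ι ι 𝕜}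
    (hA : A.IsHermitian) : (A * A).trace = ∑ i, ((hA.eigenvalues i ^ 2 : ℝ) : 𝕜) := by
  conv_lhs => rw [hA.spectral_theorem, ← map_mul, Unitary.conjStarAlgAut_apply, trace_mul_cycle,
    Unitary.coe_star_mul_self, one_mul, diagonal_mul_diagonal, trace_diagonal]
  simp [sq]

variable {B : Matrix ι ι ℝ} (hB : B.IsHermitian)

theorem isRoot_charpoly_map_iff {K : Type*} [Field K] [Algebra ℝ K] (μ : K) :
    (B.map (algebraMap ℝ K)).charpoly.IsRoot μ ↔ ∃ i, algebraMap ℝ K (hB.eigenvalues i) = μ := by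
  rw [charpoly_map, hB.charpoly_eq, Polynomial.map_prod, IsRoot.def, eval_prod, prod_eq_zero_iff]
  simp only [mem_univ, true_and, Polynomial.map_sub, map_X, map_C, eval_sub, eval_X, eval_C,
    sub_eq_zero]
  exact exists_congr fun i => eq_comm

theorem exists_eigenvalue_eq_neg {Bq : Matrix ι ι ℚ} (hBq : Bq.map (algebraMap ℚ ℝ) = B)
    {i : ι} (hi : Irrational (hB.eigenvalues i)) {c : ℚ} (hc : hB.eigenvalues i ^ 2 = c) :
    ∃ j, hB.eigenvalues j = -hB.eigenvalues i := by
  have hroots : ∀ x : ℝ, aeval x Bq.charpoly = 0 ↔ ∃ j, hB.eigenvalues j = x := by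
    intro x
    rw [aeval_def, ← eval_map, ← charpoly_map, hBq]
    simpa using hB.isRoot_charpoly_map_iff x
  exact (hroots _).1 (aeval_neg_eq_zero_of_irrational_of_sq_eq hi hc ((hroots _).2 ⟨i, rfl⟩))

end

variable {n : ℕ} {B : Matrix (Fin n) (Fin n) ℝ} (hB : B.IsHermitian)

theorem specRad_eq_sSup_abs_eigenvalues :
    specRad B = sSup (Set.range fun i => |hB.eigenvalues i|) := by
  unfold specRad
  congr 1
  ext x
  constructor
  · rintro ⟨μ, hμ, rfl⟩
    obtain ⟨i, rfl⟩ := (hB.isRoot_charpoly_map_iff μ).1 hμ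
    exact ⟨i, by simp⟩
  · rintro ⟨i, rfl⟩
    exact ⟨_, (hB.isRoot_charpoly_map_iff _).2 ⟨i, rfl⟩, by simp⟩

theorem exists_specRad_eq_abs_eigenvalue (hn : 0 < n) :
    ∃ i, specRad B = |hB.eigenvalues i| := by
  have : Nonempty (Fin n) := ⟨⟨0, hn⟩⟩
  obtain ⟨i, hi⟩ :=
    (Set.range_nonempty _).csSup_mem (Set.finite_range fun i => |hB.eigenvalues i|)
  exact ⟨i, hB.specRad_eq_sSup_abs_eigenvalues.trans hi.symm⟩

end Matrix.IsHermitian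

namespace SimpleGraph

variable {n : ℕ} (G : SimpleGraph (Fin n)) [DecidableRel G.Adj]

theorem sum_eigenvalues_adjMatrix : ∑ i, (G.isHermitian_adjMatrix ℝ).eigenvalues i = 0 := by
  simpa [trace_adjMatrix] using (G.isHermitian_adjMatrix ℝ).trace_eq_sum_eigenvalues.symm

theorem sum_sq_eigenvalues_adjMatrix :
    ∑ i, (G.isHermitian_adjMatrix ℝ).eigenvalues i ^ 2 = ∑ v, (G.degree v : ℝ) := by
  have htrace := (G.isHermitian_adjMatrix ℝ).trace_mul_self_eq_sum_sq_eigenvalues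
  simp only [RCLike.ofReal_real_eq_id, id] at htrace
  rw [← htrace, trace]
  simp only [diag_apply, adjMatrix_mul_self_apply_self]

theorem sum_degree_add_sum_degree_compl :
    ∑ v, (G.degree v : ℝ) + ∑ v, (Gᶜ.degree v : ℝ) = n * (n - 1) := by
  have hdeg : ∀ v, (G.degree v : ℝ) + Gᶜ.degree v = n - 1 := by
    intro v
    have hlt := G.degree_lt_card_verts v
    have hcompl := G.degree_compl v
    rw [Fintype.card_fin] at hlt hcompl
    rw [hcompl, Nat.cast_sub (by omega), Nat.cast_sub (by omega)]
    ring
  rw [← sum_add_distrib, sum_congr rfl fun v _ => hdeg v, sum_const, card_univ, Fintype.card_fin,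
    nsmul_eq_mul]

theorem sq_eigenvalue_adjMatrix_le (i : Fin n) :
    (G.isHermitian_adjMatrix ℝ).eigenvalues i ^ 2 ≤ (n - 1) / n * ∑ v, (G.degree v : ℝ) := by
  have hn : (0 : ℝ) < n := by exact_mod_cast i.pos
  have hcs := card_mul_sq_le_of_sum_eq_zero G.sum_eigenvalues_adjMatrix i
  rw [Fintype.card_fin, sum_sq_eigenvalues_adjMatrix] at hcs
  rw [div_mul_eq_mul_div, le_div_iff₀ hn]
  linarith

theorem sq_eigenvalue_adjMatrix_ne (hn : 2 ≤ n)
    (hT : ∑ v, (G.degree v : ℝ) = n * (n - 1) / 2) (i : Fin n) :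
    (G.isHermitian_adjMatrix ℝ).eigenvalues i ^ 2 ≠ (n - 1) ^ 2 / 2 := by
  set e := (G.isHermitian_adjMatrix ℝ).eigenvalues
  intro heq
  have hnR : (2 : ℝ) ≤ n := by exact_mod_cast hn
  have hsq : e i ^ 2 = 2 * (((n - 1) / 2 : ℚ) : ℝ) ^ 2 := by
    rw [heq]
    push_cast
    ring
  have hirr : Irrational (e i) := irrational_of_sq_eq_two_mul_sq
    (div_ne_zero (sub_ne_zero.2 (by exact_mod_cast (by omega : n ≠ 1))) two_ne_zero) hsq
  obtain ⟨j, hj : e j = -e i⟩ := (G.isHermitian_adjMatrix ℝ).exists_eigenvalue_eq_neg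
    (Bq := G.adjMatrix ℚ) (by ext; simp [adjMatrix_apply, apply_ite]) hirr
    (c := 2 * ((n - 1) / 2) ^ 2) (by rw [hsq]; push_cast; ring)
  have hij : i ≠ j := by
    rintro rfl
    exact hirr.ne_zero (by linarith)
  have hpair : e i ^ 2 + e j ^ 2 ≤ ∑ k, e k ^ 2 :=
    calc e i ^ 2 + e j ^ 2 = ∑ k ∈ {i, j}, e k ^ 2 := (sum_pair (f := fun k => e k ^ 2) hij).symm
      _ ≤ ∑ k, e k ^ 2 := sum_le_sum_of_subset_of_nonneg (subset_univ _) fun k _ _ => sq_nonneg _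
  rw [hj, neg_sq, sum_sq_eigenvalues_adjMatrix, hT, heq] at hpair
  obtain rfl : n = 2 := by
    have : (n : ℝ) ≤ 2 := by nlinarith
    exact_mod_cast le_antisymm this hnR
  have hT1 : ∑ v, G.degree v = 1 := by
    have : ((∑ v, G.degree v : ℕ) : ℝ) = 1 := by
      push_cast
      rw [hT]
      norm_num
    exact_mod_cast this
  have := G.sum_degrees_eq_twice_card_edges
  omega

theorem sq_specRad_adjMatrix_le (hn : 0 < n) :
    specRad (G.adjMatrix ℝ) ^ 2 ≤ (n - 1) / n * ∑ v, (G.degree v : ℝ) := by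
  obtain ⟨i, hi⟩ := (G.isHermitian_adjMatrix ℝ).exists_specRad_eq_abs_eigenvalue hn
  rw [hi, sq_abs]
  exact G.sq_eigenvalue_adjMatrix_le i

theorem sq_specRad_adjMatrix_lt (hn : 2 ≤ n) (hG : ∑ v, G.degree v = ∑ v, Gᶜ.degree v) :
    specRad (G.adjMatrix ℝ) ^ 2 < (n - 1) / n * ∑ v, (G.degree v : ℝ) := by
  have hT : ∑ v, (G.degree v : ℝ) = n * (n - 1) / 2 := by
    have hsum := G.sum_degree_add_sum_degree_compl
    rw [← Nat.cast_sum, ← Nat.cast_sum, ← hG] at hsum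
    push_cast at hsum
    linarith
  have hbound : (n - 1) / n * ∑ v, (G.degree v : ℝ) = (n - 1) ^ 2 / 2 := by
    have : (n : ℝ) ≠ 0 := by positivity
    rw [hT]
    field_simp
  obtain ⟨i, hi⟩ := (G.isHermitian_adjMatrix ℝ).exists_specRad_eq_abs_eigenvalue (by omega)
  rw [hi, sq_abs, hbound]
  exact (hbound ▸ G.sq_eigenvalue_adjMatrix_le i).lt_of_ne (G.sq_eigenvalue_adjMatrix_ne hn hT i)

end SimpleGraph

theorem add_lt_sqrt_two_mul_add {x y a b : ℝ} (hx : 0 ≤ x) (hy : 0 ≤ y) (hxa : x ^ 2 ≤ a)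
    (hyb : y ^ 2 ≤ b) (hab : a = b → x ^ 2 < a) : x + y < √(2 * (a + b)) := by
  rw [Real.lt_sqrt (by positivity)]
  by_cases h : a = b
  · nlinarith [hab h, sq_nonneg (x - y)]
  · by_contra! hle
    obtain rfl : x = y := by nlinarith [sq_nonneg (x - y)]
    exact h (by nlinarith)

/-- Nikiforov (2007): for every graph `G` of order `n ≥ 2`,
`ρ(G) + ρ(Ḡ) < √2 (n - 1)`. -/
theorem nikiforov_bound (n : ℕ) (hn : 2 ≤ n) (G : SimpleGraph (Fin n))
    [DecidableRel G.Adj] :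
    specRad (G.adjMatrix ℝ) + specRad (Gᶜ.adjMatrix ℝ) < Real.sqrt 2 * ((n : ℝ) - 1) := by
  have hnR : (2 : ℝ) ≤ n := by exact_mod_cast hn
  have hcoef : ((n : ℝ) - 1) / n ≠ 0 := div_ne_zero (by linarith) (by linarith)
  calc specRad (G.adjMatrix ℝ) + specRad (Gᶜ.adjMatrix ℝ)
      < √(2 * ((n - 1) / n * ∑ v, (G.degree v : ℝ) + (n - 1) / n * ∑ v, (Gᶜ.degree v : ℝ))) := by
        refine add_lt_sqrt_two_mul_add (specRad_nonneg _) (specRad_nonneg _)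
          (G.sq_specRad_adjMatrix_le (by omega)) (Gᶜ.sq_specRad_adjMatrix_le (by omega))
          fun h => G.sq_specRad_adjMatrix_lt hn ?_
        exact_mod_cast mul_left_cancel₀ hcoef h
    _ = √2 * (n - 1) := by
      have hsq : ((n : ℝ) - 1) / n * (n * (n - 1)) = (n - 1) ^ 2 := by
        field_simp
      rw [← mul_add, G.sum_degree_add_sum_degree_compl, hsq, Real.sqrt_mul' _ (sq_nonneg _),
        Real.sqrt_sq (by linarith)]
end

section
/- Let $\rho_0 = \rho(K_{\lfloor n/3\rfloor} \vee N_{n - \lfloor n/3\rfloor}) + \rho(N_{\lfloor n/3\rfloor} + K_{n - \lfloor n/3\rfloor})$. Then $\rho_0 = \frac{1}{2}\left(2n - 3 - \lfloor n/3\rfloor + \sqrt{\left(\frac{2n-1}{3} + \lfloor n/3\rfloor\right)^2 + \frac{8 k_n}{9}}\right)$, where $k_n = 0$ if $n \equiv 2 \pmod 3$ and $k_n = 1$ otherwise. In particular $\rho_0 \ge \frac{4n-5}{3}$. -/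
/-- The complete split graph `K_q ∨ N_{n-q}` on vertex set `Fin n`:
the first `q` vertices form a clique, joined to `n - q` independent vertices. -/
def completeSplitGraph (n q : ℕ) : SimpleGraph (Fin n) where
  Adj i j := i ≠ j ∧ ((i : ℕ) < q ∨ (j : ℕ) < q)
  symm := by
    constructor
    intro i j h
    exact ⟨h.1.symm, h.2.symm⟩
  loopless := by
    constructor
    intro i h
    exact h.1 rfl

instance (n q : ℕ) : DecidableRel (completeSplitGraph n q).Adj :=
  fun i j => inferInstanceAs (Decidable (i ≠ j ∧ ((i : ℕ) < q ∨ (j : ℕ) < q)))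

/-!
A nonnegative matrix `A` with a real eigenvalue `r` and an entrywise positive vector `w` with
`A w ≤ r w` has spectral radius `r`: at a coordinate `i` maximising `|vᵢ| / wᵢ` for an eigenvector
`v` of `μ`, one gets `|μ| |vᵢ| ≤ ∑ⱼ Aᵢⱼ |vⱼ| ≤ r |vᵢ|`.

Both `K_q ∨ N_{n-q}` and its complement `N_q + K_{n-q}` map vectors that are constant on the two
parts to vectors of the same kind, through the quotient matrices `[[q-1, n-q], [q, 0]]` and
`[[0, 0], [0, n-q-1]]`. For the split graph the eigenvector of the larger root of
`x² = (q-1)x + q(n-q)` is positive and serves as `w` too; for the complement take the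
eigenvector `(0, 1)` of `n - q - 1` and `w = (1, 1)`. With `q = ⌊n/3⌋` the formula follows by splitting on
`n mod 3`, and the lower bound from `√(x² + 8kₙ/9) ≥ x`.
-/

open Matrix Finset

theorem Matrix.isRoot_charpoly_iff_exists_mulVec_eq_smul {ι K : Type*} [Fintype ι]
    [DecidableEq ι] [Field K] (A : Matrix ι ι K) (μ : K) :
    A.charpoly.IsRoot μ ↔ ∃ v ≠ 0, A *ᵥ v = μ • v := by
  rw [← mem_spectrum_iff_isRoot_charpoly, ← spectrum_toLin',
    ← Module.End.hasEigenvalue_iff_mem_spectrum]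
  constructor
  · intro h
    obtain ⟨v, hv⟩ := h.exists_hasEigenvector
    exact ⟨v, hv.2, hv.apply_eq_smul⟩
  · rintro ⟨v, hv, hAv⟩
    exact Module.End.hasEigenvalue_of_hasEigenvector ⟨Module.End.mem_eigenspace_iff.2 hAv, hv⟩

theorem Matrix.norm_le_of_mulVec_eq_smul_of_mulVec_le {ι : Type*} [Fintype ι]
    {A : Matrix ι ι ℝ} (hA : ∀ i j, 0 ≤ A i j) {w : ι → ℝ} (hw : ∀ i, 0 < w i) {r : ℝ}
    (hAw : ∀ i, (A *ᵥ w) i ≤ r * w i) {μ : ℂ} {v : ι → ℂ} (hv : v ≠ 0)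
    (hAv : A.map (↑) *ᵥ v = μ • v) : ‖μ‖ ≤ r := by
  obtain ⟨k, hk⟩ : ∃ k, v k ≠ 0 := Function.ne_iff.1 hv
  obtain ⟨i, -, hi⟩ := exists_max_image univ (fun j => ‖v j‖ / w j) ⟨k, mem_univ k⟩
  set t := ‖v i‖ / w i
  have hvt : ∀ j, ‖v j‖ ≤ t * w j := fun j => (div_le_iff₀ (hw j)).1 (hi j (mem_univ j))
  have ht : 0 < t := (div_pos (norm_pos_iff.2 hk) (hw k)).trans_le (hi k (mem_univ k))
  have hvi : 0 < ‖v i‖ := (div_pos_iff_of_pos_right (hw i)).1 ht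
  suffices ‖μ‖ * ‖v i‖ ≤ r * ‖v i‖ from le_of_mul_le_mul_right this hvi
  calc ‖μ‖ * ‖v i‖ = ‖∑ j, (A i j : ℂ) * v j‖ := by
        rw [← norm_mul, ← smul_eq_mul, ← Pi.smul_apply, ← hAv]; rfl
    _ ≤ ∑ j, A i j * ‖v j‖ := by
        refine (norm_sum_le _ _).trans_eq (sum_congr rfl fun j _ => ?_)
        rw [norm_mul, Complex.norm_real, Real.norm_of_nonneg (hA i j)]
    _ ≤ ∑ j, A i j * (t * w j) := by gcongr with j; exacts [hA i j, hvt j]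
    _ = t * (A *ᵥ w) i := by
        simp only [mulVec, dotProduct, mul_sum]
        exact sum_congr rfl fun j _ => by ring
    _ ≤ t * (r * w i) := by gcongr; exact hAw i
    _ = r * ‖v i‖ := by have := (hw i).ne'; simp only [t]; field_simp

theorem specRad_eq_of_mulVec_eq_smul_of_mulVec_le {n : ℕ} {A : Matrix (Fin n) (Fin n) ℝ}
    (hA : ∀ i j, 0 ≤ A i j) {r : ℝ} {v : Fin n → ℝ} (hv : v ≠ 0) (hAv : A *ᵥ v = r • v)
    {w : Fin n → ℝ} (hw : ∀ i, 0 < w i) (hAw : ∀ i, (A *ᵥ w) i ≤ r * w i) :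
    specRad A = r := by
  have hle : ∀ μ, (A.map Complex.ofReal).charpoly.IsRoot μ → ‖μ‖ ≤ r := fun μ hμ => by
    obtain ⟨u, hu, hAu⟩ := (isRoot_charpoly_iff_exists_mulVec_eq_smul _ μ).1 hμ
    exact norm_le_of_mulVec_eq_smul_of_mulVec_le hA hw hAw hu hAu
  have hr : (A.map Complex.ofReal).charpoly.IsRoot (r : ℂ) := by
    refine (isRoot_charpoly_iff_exists_mulVec_eq_smul _ _).2
      ⟨(↑) ∘ v, Complex.ofReal_injective.comp_left.ne hv, funext fun i => ?_⟩
    rw [show (Complex.ofReal : ℝ → ℂ) = Complex.ofRealHom from rfl, ← RingHom.map_mulVec, hAv]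
    simp
  have hnorm : ‖(r : ℂ)‖ = r :=
    le_antisymm (hle _ hr) (Complex.norm_real r ▸ Real.norm_eq_abs r ▸ le_abs_self r)
  refine IsGreatest.csSup_eq ⟨⟨r, hr, hnorm.symm⟩, ?_⟩
  rintro _ ⟨μ, hμ, rfl⟩
  exact hle μ hμ

theorem SimpleGraph.adjMatrix_nonneg {V α : Type*} [Zero α] [One α] [Preorder α]
    [ZeroLEOneClass α] (G : SimpleGraph V) [DecidableRel G.Adj] (i j : V) :
    0 ≤ G.adjMatrix α i j := by
  rw [adjMatrix_apply]
  split_ifs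
  exacts [zero_le_one, le_rfl]

lemma Fin.card_filter_le_val {n q : ℕ} (hqn : q ≤ n) : #{i : Fin n | q ≤ (i : ℕ)} = n - q := by
  simp_rw [← not_lt]
  rw [filter_not, card_sdiff_of_subset (filter_subset _ _), card_univ, Fintype.card_fin,
    Fin.card_filter_val_lt, min_eq_right hqn]

lemma quadratic_root_sq_eq (p c : ℝ) (hc : 0 ≤ c) :
    ((p + √(p ^ 2 + 4 * c)) / 2) ^ 2 = p * ((p + √(p ^ 2 + 4 * c)) / 2) + c := by
  have := Real.sq_sqrt (by positivity : 0 ≤ p ^ 2 + 4 * c)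
  linear_combination this / 4

lemma quadratic_root_pos (p : ℝ) {c : ℝ} (hc : 0 < c) : 0 < (p + √(p ^ 2 + 4 * c)) / 2 := by
  have : |p| < √(p ^ 2 + 4 * c) := (Real.lt_sqrt (abs_nonneg p)).2 (by rw [sq_abs]; linarith)
  linarith [neg_abs_le p]

namespace completeSplitGraph

def splitVec (n q : ℕ) (a b : ℝ) (i : Fin n) : ℝ := if (i : ℕ) < q then a else b

variable {n q : ℕ}

lemma splitVec_of_lt {a b : ℝ} {i : Fin n} (hi : (i : ℕ) < q) : splitVec n q a b i = a :=
  if_pos hi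

lemma splitVec_of_le {a b : ℝ} {i : Fin n} (hi : q ≤ (i : ℕ)) : splitVec n q a b i = b :=
  if_neg (not_lt.2 hi)

lemma smul_splitVec (c a b : ℝ) : c • splitVec n q a b = splitVec n q (c * a) (c * b) := by
  ext i
  simp only [splitVec, Pi.smul_apply, smul_eq_mul]
  split_ifs <;> rfl

lemma splitVec_pos {a b : ℝ} (ha : 0 < a) (hb : 0 < b) (i : Fin n) :
    0 < splitVec n q a b i := by
  unfold splitVec
  split_ifs
  exacts [ha, hb]

lemma splitVec_ne_zero (hqn : q < n) (a : ℝ) {b : ℝ} (hb : b ≠ 0) : splitVec n q a b ≠ 0 :=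
  fun h => hb ((splitVec_of_le (i := ⟨q, hqn⟩) le_rfl).symm.trans (congrFun h _))

lemma sum_splitVec_filter_lt (hqn : q ≤ n) (a b : ℝ) :
    ∑ i ∈ ({i | (i : ℕ) < q} : Finset (Fin n)), splitVec n q a b i = q * a := by
  rw [sum_congr rfl fun (i : Fin n) hi =>
      splitVec_of_lt (a := a) (b := b) ((mem_filter_univ i).1 hi),
    sum_const, Fin.card_filter_val_lt, min_eq_right hqn, nsmul_eq_mul]

lemma sum_splitVec_filter_le (hqn : q ≤ n) (a b : ℝ) :
    ∑ i ∈ ({i | q ≤ (i : ℕ)} : Finset (Fin n)), splitVec n q a b i = (n - q) * b := by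
  rw [sum_congr rfl fun (i : Fin n) hi =>
      splitVec_of_le (a := a) (b := b) ((mem_filter_univ i).1 hi),
    sum_const, Fin.card_filter_le_val hqn, nsmul_eq_mul, Nat.cast_sub hqn]

lemma sum_splitVec (hqn : q ≤ n) (a b : ℝ) :
    ∑ i, splitVec n q a b i = q * a + (n - q) * b := by
  rw [← sum_filter_add_sum_filter_not univ (fun i : Fin n => (i : ℕ) < q)]
  simp_rw [not_lt]
  rw [sum_splitVec_filter_lt hqn, sum_splitVec_filter_le hqn]

@[simp]
lemma adj_iff {i j : Fin n} :
    (completeSplitGraph n q).Adj i j ↔ i ≠ j ∧ ((i : ℕ) < q ∨ (j : ℕ) < q) := Iff.rfl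

lemma neighborFinset_of_lt {i : Fin n} (hi : (i : ℕ) < q) :
    (completeSplitGraph n q).neighborFinset i = univ.erase i := by
  ext j
  simp [hi, eq_comm]

lemma neighborFinset_of_le {i : Fin n} (hi : q ≤ (i : ℕ)) :
    (completeSplitGraph n q).neighborFinset i = ({j | (j : ℕ) < q} : Finset (Fin n)) := by
  ext j
  simp only [SimpleGraph.mem_neighborFinset, adj_iff, mem_filter_univ]
  omega

lemma compl_neighborFinset_of_lt {i : Fin n} (hi : (i : ℕ) < q) :
    (completeSplitGraph n q)ᶜ.neighborFinset i = ∅ := by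
  ext j
  simp [hi]

lemma compl_neighborFinset_of_le {i : Fin n} (hi : q ≤ (i : ℕ)) :
    (completeSplitGraph n q)ᶜ.neighborFinset i =
      ({j | q ≤ (j : ℕ)} : Finset (Fin n)).erase i := by
  ext j
  simp only [SimpleGraph.mem_neighborFinset, SimpleGraph.compl_adj, adj_iff, mem_erase,
    mem_filter_univ, ne_eq]
  omega

lemma adjMatrix_mulVec_splitVec (hqn : q ≤ n) (a b : ℝ) :
    (completeSplitGraph n q).adjMatrix ℝ *ᵥ splitVec n q a b =
      splitVec n q ((q - 1) * a + (n - q) * b) (q * a) := by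
  ext i
  rw [SimpleGraph.adjMatrix_mulVec_apply]
  rcases lt_or_ge (i : ℕ) q with hi | hi
  · rw [neighborFinset_of_lt hi, sum_erase_eq_sub (mem_univ i), sum_splitVec hqn,
      splitVec_of_lt hi, splitVec_of_lt hi]
    ring
  · rw [neighborFinset_of_le hi, sum_splitVec_filter_lt hqn, splitVec_of_le hi]

lemma compl_adjMatrix_mulVec_splitVec (hqn : q ≤ n) (a b : ℝ) :
    (completeSplitGraph n q)ᶜ.adjMatrix ℝ *ᵥ splitVec n q a b =
      splitVec n q 0 ((n - q - 1) * b) := by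
  ext i
  rw [SimpleGraph.adjMatrix_mulVec_apply]
  rcases lt_or_ge (i : ℕ) q with hi | hi
  · rw [compl_neighborFinset_of_lt hi, sum_empty, splitVec_of_lt hi]
  · rw [compl_neighborFinset_of_le hi, sum_erase_eq_sub ((mem_filter_univ i).2 hi),
      sum_splitVec_filter_le hqn, splitVec_of_le hi, splitVec_of_le hi]
    ring

theorem specRad_adjMatrix (hq : 0 < q) (hqn : q < n) :
    specRad ((completeSplitGraph n q).adjMatrix ℝ) =
      (q - 1 + √((q - 1) ^ 2 + 4 * (q * (n - q)))) / 2 := by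
  have hc : (0 : ℝ) < q * (n - q) := mul_pos (Nat.cast_pos.2 hq) (by simp [hqn])
  set r := ((q - 1 : ℝ) + √((q - 1) ^ 2 + 4 * (q * (n - q)))) / 2
  have hAv : (completeSplitGraph n q).adjMatrix ℝ *ᵥ splitVec n q r q =
      r • splitVec n q r q := by
    rw [adjMatrix_mulVec_splitVec hqn.le, smul_splitVec, ← pow_two, quadratic_root_sq_eq _ _ hc.le]
    congr 1 <;> ring
  exact specRad_eq_of_mulVec_eq_smul_of_mulVec_le (SimpleGraph.adjMatrix_nonneg _)
    (splitVec_ne_zero hqn r (Nat.cast_ne_zero.2 hq.ne')) hAv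
    (splitVec_pos (quadratic_root_pos _ hc) (Nat.cast_pos.2 hq)) fun i => (congrFun hAv i).le

theorem specRad_compl_adjMatrix (hqn : q < n) :
    specRad ((completeSplitGraph n q)ᶜ.adjMatrix ℝ) = n - q - 1 := by
  have hr : (0 : ℝ) ≤ n - q - 1 := by
    have : (q : ℝ) + 1 ≤ n := by exact_mod_cast hqn
    linarith
  refine specRad_eq_of_mulVec_eq_smul_of_mulVec_le (SimpleGraph.adjMatrix_nonneg _)
    (splitVec_ne_zero hqn 0 one_ne_zero) ?_ (splitVec_pos (q := q) one_pos one_pos) fun i => ?_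
  · rw [compl_adjMatrix_mulVec_splitVec hqn.le, smul_splitVec, mul_zero]
  · rw [compl_adjMatrix_mulVec_splitVec hqn.le]
    rcases lt_or_ge (i : ℕ) q with hi | hi
    · simp only [splitVec_of_lt hi, mul_one, hr]
    · simp only [splitVec_of_le hi, le_rfl]

end completeSplitGraph

lemma discriminant_div_three_eq (n : ℕ) :
    (((n / 3 : ℕ) : ℝ) - 1) ^ 2 + 4 * (((n / 3 : ℕ) : ℝ) * (n - (n / 3 : ℕ))) =
      ((2 * (n : ℝ) - 1) / 3 + ((n / 3 : ℕ) : ℝ)) ^ 2 +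
        8 * (((if n % 3 = 2 then 0 else 1 : ℕ)) : ℝ) / 9 := by
  have hn : (n : ℝ) = 3 * (n / 3 : ℕ) + (n % 3 : ℕ) := by
    exact_mod_cast (Nat.div_add_mod n 3).symm
  have hr : n % 3 < 3 := Nat.mod_lt _ (by norm_num)
  rw [hn]
  interval_cases n % 3 <;> norm_num <;> ring

/-- Proposition 4.3: with `ρ₀ = ρ(K_{⌊n/3⌋} ∨ N_{n-⌊n/3⌋}) + ρ(its complement)`,
one has the closed formula of (4.3) and the lower bound `ρ₀ ≥ (4n-5)/3`. -/
theorem rho0_formula (n : ℕ) (hn : 3 ≤ n) (ρ₀ : ℝ)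
    (hρ₀ : ρ₀ = specRad ((completeSplitGraph n (n / 3)).adjMatrix ℝ) +
        specRad (((completeSplitGraph n (n / 3))ᶜ).adjMatrix ℝ))
    (kn : ℕ) (hkn : kn = if n % 3 = 2 then 0 else 1) :
    ρ₀ = (2 * (n : ℝ) - 3 - ((n / 3 : ℕ) : ℝ) +
        Real.sqrt (((2 * (n : ℝ) - 1) / 3 + ((n / 3 : ℕ) : ℝ)) ^ 2 + 8 * (kn : ℝ) / 9)) / 2 ∧
    (4 * (n : ℝ) - 5) / 3 ≤ ρ₀ := by
  have hformula : ρ₀ = (2 * (n : ℝ) - 3 - ((n / 3 : ℕ) : ℝ) +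
      √(((2 * (n : ℝ) - 1) / 3 + ((n / 3 : ℕ) : ℝ)) ^ 2 + 8 * (kn : ℝ) / 9)) / 2 := by
    rw [hρ₀, completeSplitGraph.specRad_adjMatrix (by omega) (by omega),
      completeSplitGraph.specRad_compl_adjMatrix (by omega), discriminant_div_three_eq, hkn]
    ring
  refine ⟨hformula, ?_⟩
  have hsqrt : (2 * (n : ℝ) - 1) / 3 + ((n / 3 : ℕ) : ℝ) ≤
      √(((2 * (n : ℝ) - 1) / 3 + ((n / 3 : ℕ) : ℝ)) ^ 2 + 8 * (kn : ℝ) / 9) :=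
    Real.le_sqrt_of_sq_le (le_add_of_nonneg_right (by positivity))
  rw [hformula]
  linarith
end

section
/- Let $A \in \mathscr{S}^*(n)$ with parameters $(c, v, s)$ and complement parameters $(\overline{c}, \overline{v}, \overline{s})$ obtained from $\overline{A}$ defined by $\overline{a}_{ij} = 1 - a_{n-j+1, n-i+1}$ for $i \ne j$. If $c + \overline{c} \ge n$, then $s + \overline{s} \le -\frac{3}{4}(c+\overline{c})^2 + (n+1)(c+\overline{c}) - \frac{1}{4}(c-\overline{c})^2 - v - \overline{c}$, with equality when $\overline{v} = n - c - 1$. -/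
/-- Membership in `𝒮*(n)`: `(0,1)`-matrix with zero diagonal, `a₁₂ = a₂₁ = 1`,
`a_{n-1,n} = a_{n,n-1} = 0` (indices 1-based), and the staircase condition:
if `a_{ij} = 1` then `a_{hk} = 1` for all `h ≤ i`, `k ≤ j` with `h ≠ k`. -/
structure MemSStar (n : ℕ) (A : Matrix (Fin n) (Fin n) ℝ) : Prop where
  entries : ∀ i j, A i j = 0 ∨ A i j = 1
  diag : ∀ i, A i i = 0
  a12 : ∀ i j : Fin n, (i : ℕ) = 0 → (j : ℕ) = 1 → A i j = 1 ∧ A j i = 1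
  alast : ∀ i j : Fin n, (i : ℕ) = n - 2 → (j : ℕ) = n - 1 → A i j = 0 ∧ A j i = 0
  staircase : ∀ i j h k : Fin n, A i j = 1 → h ≤ i → k ≤ j → h ≠ k → A h k = 1

/-- The sum of the first `i` row sums of `A`. -/
noncomputable def sumFirst {n : ℕ} (A : Matrix (Fin n) (Fin n) ℝ) (i : ℕ) : ℝ :=
  ∑ j ∈ Finset.univ.filter (fun j : Fin n => (j : ℕ) < i), ∑ kk, A j kk

/-- The parameter `c(A) = max { i : r₁ + ⋯ + rᵢ > i(i-1) }`. -/
noncomputable def cpar {n : ℕ} (A : Matrix (Fin n) (Fin n) ℝ) : ℕ :=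
  Nat.findGreatest (fun i => ((i * (i - 1) : ℕ) : ℝ) < sumFirst A i) n

/-- The `i`-th row sum of `A` (1-based index `i+1`; `0` if out of range). -/
noncomputable def rowSumAt {n : ℕ} (A : Matrix (Fin n) (Fin n) ℝ) (i : ℕ) : ℝ :=
  if h : i < n then ∑ j, A ⟨i, h⟩ j else 0

/-- The parameter `v(A) = r_{c+1}`. -/
noncomputable def vpar {n : ℕ} (A : Matrix (Fin n) (Fin n) ℝ) : ℝ :=
  rowSumAt A (cpar A)

/-- The parameter `s(A) = ∑_{i ≤ c} rᵢ - c(c-1)`. -/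
noncomputable def spar {n : ℕ} (A : Matrix (Fin n) (Fin n) ℝ) : ℝ :=
  sumFirst A (cpar A) - (cpar A : ℝ) * ((cpar A : ℝ) - 1)

/-- `φ(A) = (v - 1 + √((2c - v - 1)² + 4s)) / 2`. -/
noncomputable def phiPar {n : ℕ} (A : Matrix (Fin n) (Fin n) ℝ) : ℝ :=
  (vpar A - 1 + Real.sqrt ((2 * (cpar A : ℝ) - vpar A - 1) ^ 2 + 4 * spar A)) / 2

/-- The reflected complement `Ā`, with `ā_{ij} = 1 - a_{n-j+1, n-i+1}` off the
diagonal (1-based indices) and zero diagonal. -/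
def reflComp {n : ℕ} (A : Matrix (Fin n) (Fin n) ℝ) : Matrix (Fin n) (Fin n) ℝ :=
  Matrix.of fun i j => if i = j then 0 else 1 - A j.rev i.rev

/-! Write `p = n - c̄`. Since the row sums of `Ā` are `n - 1` minus the reversed column sums
of `A`, the quantity `s + s̄` equals, up to a polynomial in `n`, `c`, `c̄`, the sum of `A` over
the block of its first `c` rows and first `p` columns, minus its sum over the complementary
block of the last `n - c` rows and last `n - p` columns. As `p ≤ c`, the first block has at most
`cp - p` ones (none on the diagonal), and the second one contains at least `v - p` ones of row
`c + 1`; this gives the inequality.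

If `v̄ = n - c - 1`, column `p` of `A` has exactly `c` ones. By the staircase condition row `c + 1`
then has a one in column `p`, so the first block is full off the diagonal and row `c + 1` has
ones in all of its first `p` columns, while every row below row `c + 1` vanishes from column `p`
on. So both bounds are attained. -/

open Finset

section Segments

variable {n : ℕ}

def finLT (k : ℕ) : Finset (Fin n) := univ.filter fun i => (i : ℕ) < k

def finGE (k : ℕ) : Finset (Fin n) := univ.filter fun i => k ≤ (i : ℕ)

@[simp]
lemma mem_finLT {k : ℕ} {i : Fin n} : i ∈ finLT k ↔ (i : ℕ) < k := by simp [finLT]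

@[simp]
lemma mem_finGE {k : ℕ} {i : Fin n} : i ∈ finGE k ↔ k ≤ (i : ℕ) := by simp [finGE]

lemma card_finLT {k : ℕ} (hk : k ≤ n) : (finLT k : Finset (Fin n)).card = k := by
  rw [finLT, Fin.card_filter_val_lt, min_eq_right hk]

lemma sum_finLT_add_sum_finGE {M : Type*} [AddCommMonoid M] (k : ℕ) (f : Fin n → M) :
    ∑ i ∈ finLT k, f i + ∑ i ∈ finGE k, f i = ∑ i, f i := by
  simpa only [finLT, finGE, not_lt] using
    sum_filter_add_sum_filter_not univ (fun i : Fin n => (i : ℕ) < k) f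

lemma sum_finLT_rev {M : Type*} [AddCommMonoid M] (k : ℕ) (f : Fin n → M) :
    ∑ i ∈ finLT k, f i.rev = ∑ j ∈ finGE (n - k), f j :=
  sum_nbij' Fin.rev Fin.rev (fun i hi => by simp at hi ⊢; omega)
    (fun j hj => by simp at hj ⊢; omega) (fun i _ => Fin.rev_rev i) (fun j _ => Fin.rev_rev j)
    fun _ _ => rfl

end Segments

section CardSubOne

variable {ι : Type*} [DecidableEq ι] {s : Finset ι} {f : ι → ℝ} {a : ι}

lemma sum_le_card_sub_one (ha : a ∈ s) (hfa : f a = 0) (hf : ∀ i ∈ s, f i ≤ 1) :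
    ∑ i ∈ s, f i ≤ s.card - 1 := by
  rw [← sum_erase s hfa, ← cast_card_erase_of_mem ha]
  simpa using sum_le_card_nsmul _ _ 1 fun i hi => hf i (mem_of_mem_erase hi)

lemma sum_eq_card_sub_one (ha : a ∈ s) (hfa : f a = 0) (hf : ∀ i ∈ s, i ≠ a → f i = 1) :
    ∑ i ∈ s, f i = s.card - 1 := by
  rw [← sum_erase s hfa, ← cast_card_erase_of_mem ha,
    sum_congr rfl fun i hi => hf i (mem_of_mem_erase hi) (ne_of_mem_erase hi)]
  simp

end CardSubOne

section Blocks

variable {n : ℕ} (A : Matrix (Fin n) (Fin n) ℝ)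

def blockSum (R C : Finset (Fin n)) : ℝ := ∑ i ∈ R, ∑ j ∈ C, A i j

lemma blockSum_finLT_le (hle : ∀ i j, A i j ≤ 1) (hdiag : ∀ i, A i i = 0) {c p : ℕ}
    (hpc : p ≤ c) (hc : c ≤ n) : blockSum A (finLT c) (finLT p) ≤ c * p - p := by
  calc blockSum A (finLT c) (finLT p) = ∑ j ∈ finLT p, ∑ i ∈ finLT c, A i j := sum_comm
    _ ≤ ∑ _j ∈ finLT p, ((c : ℝ) - 1) :=
        sum_le_sum fun j hj => by
          simpa [card_finLT hc] using sum_le_card_sub_one (f := fun i => A i j)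
            (mem_finLT.2 ((mem_finLT.1 hj).trans_le hpc)) (hdiag j) fun i _ => hle i j
    _ = c * p - p := by rw [sum_const, card_finLT (hpc.trans hc), nsmul_eq_mul]; ring

lemma blockSum_finLT_eq (hdiag : ∀ i, A i i = 0) {c p : ℕ} (hpc : p ≤ c) (hc : c ≤ n)
    (hone : ∀ i j : Fin n, (i : ℕ) < c → (j : ℕ) < p → i ≠ j → A i j = 1) :
    blockSum A (finLT c) (finLT p) = c * p - p := by
  calc blockSum A (finLT c) (finLT p) = ∑ j ∈ finLT p, ∑ i ∈ finLT c, A i j := sum_comm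
    _ = ∑ _j ∈ finLT p, ((c : ℝ) - 1) :=
        sum_congr rfl fun j hj => by
          simpa [card_finLT hc] using sum_eq_card_sub_one (f := fun i => A i j)
            (mem_finLT.2 ((mem_finLT.1 hj).trans_le hpc)) (hdiag j)
            fun i hi hij => hone i j (mem_finLT.1 hi) (mem_finLT.1 hj) hij
    _ = c * p - p := by rw [sum_const, card_finLT (hpc.trans hc), nsmul_eq_mul]; ring

lemma rowSumAt_sub_le_blockSum_finGE (h0 : ∀ i j, 0 ≤ A i j) (hle : ∀ i j, A i j ≤ 1)
    (c : ℕ) {p : ℕ} (hp : p ≤ n) : rowSumAt A c - p ≤ blockSum A (finGE c) (finGE p) := by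
  have hblock : 0 ≤ blockSum A (finGE c) (finGE p) :=
    sum_nonneg fun i _ => sum_nonneg fun j _ => h0 i j
  unfold rowSumAt
  split_ifs with hc
  · have hleft : ∑ j ∈ finLT p, A ⟨c, hc⟩ j ≤ p := by
      simpa [card_finLT hp] using sum_le_card_nsmul (finLT p) _ 1 fun j _ => hle _ j
    have hright : ∑ j ∈ finGE p, A ⟨c, hc⟩ j ≤ blockSum A (finGE c) (finGE p) :=
      single_le_sum (f := fun i => ∑ j ∈ finGE p, A i j)
        (fun i _ => sum_nonneg fun j _ => h0 i j) (mem_finGE.2 le_rfl)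
    linarith [sum_finLT_add_sum_finGE p (A ⟨c, hc⟩)]
  · linarith [p.cast_nonneg (α := ℝ)]

lemma blockSum_finGE_eq {c p : ℕ} (hc : c < n) (hp : p ≤ n)
    (hrows : ∀ i j : Fin n, c < (i : ℕ) → p ≤ (j : ℕ) → A i j = 0)
    (hrow : ∀ j : Fin n, (j : ℕ) < p → A ⟨c, hc⟩ j = 1) :
    blockSum A (finGE c) (finGE p) = rowSumAt A c - p := by
  have hsingle : blockSum A (finGE c) (finGE p) = ∑ j ∈ finGE p, A ⟨c, hc⟩ j :=
    sum_eq_single_of_mem _ (mem_finGE.2 le_rfl) fun i hi hne =>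
      sum_eq_zero fun j hj => hrows i j
        (lt_of_le_of_ne (mem_finGE.1 hi) fun h => hne (Fin.ext h.symm)) (mem_finGE.1 hj)
  have hleft : ∑ j ∈ finLT p, A ⟨c, hc⟩ j = p := by
    rw [sum_congr rfl fun j hj => hrow j (mem_finLT.1 hj)]
    simp [card_finLT hp]
  rw [rowSumAt, dif_pos hc, ← sum_finLT_add_sum_finGE p, hsingle, hleft]
  ring

lemma sum_reflComp_row (hdiag : ∀ i, A i i = 0) (i : Fin n) :
    ∑ j, reflComp A i j = n - 1 - ∑ k, A k i.rev := by
  have hentry : ∀ j, reflComp A i j = 1 - A j.rev i.rev - if i = j then 1 else 0 := by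
    intro j
    by_cases hij : i = j
    · subst hij; simp [reflComp, hdiag]
    · simp [reflComp, hij]
  simp only [hentry, sum_sub_distrib, sum_ite_eq, mem_univ, if_true, sum_const, card_univ,
    Fintype.card_fin, nsmul_eq_mul, mul_one]
  rw [← Equiv.sum_comp Fin.revPerm fun k => A k i.rev]
  simp only [Fin.revPerm_apply]
  ring

lemma sumFirst_add_sumFirst_reflComp (hdiag : ∀ i, A i i = 0) (c : ℕ) {k : ℕ} (hk : k ≤ n) :
    sumFirst A c + sumFirst (reflComp A) k = k * (n - 1) +
      blockSum A (finLT c) (finLT (n - k)) - blockSum A (finGE c) (finGE (n - k)) := by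
  have hA : sumFirst A c =
      blockSum A (finLT c) (finLT (n - k)) + blockSum A (finLT c) (finGE (n - k)) := by
    rw [blockSum, blockSum, ← sum_add_distrib]
    exact sum_congr rfl fun i _ => (sum_finLT_add_sum_finGE _ _).symm
  have hAbar : sumFirst (reflComp A) k = k * (n - 1) - ∑ j ∈ finGE (n - k), ∑ i, A i j := by
    change ∑ i ∈ finLT k, _ = _
    rw [sum_congr rfl fun i _ => sum_reflComp_row A hdiag i, sum_sub_distrib, sum_const,
      card_finLT hk, sum_finLT_rev k fun j => ∑ i, A i j, nsmul_eq_mul]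
  have hcols : ∑ j ∈ finGE (n - k), ∑ i, A i j =
      blockSum A (finLT c) (finGE (n - k)) + blockSum A (finGE c) (finGE (n - k)) := by
    rw [sum_comm, blockSum, blockSum, sum_finLT_add_sum_finGE]
  rw [hA, hAbar, hcols]
  ring

end Blocks

namespace MemSStar

variable {n : ℕ} {A : Matrix (Fin n) (Fin n) ℝ}

lemma nonneg (hA : MemSStar n A) (i j : Fin n) : 0 ≤ A i j := by
  rcases hA.entries i j with h | h <;> simp [h]

lemma le_one (hA : MemSStar n A) (i j : Fin n) : A i j ≤ 1 := by
  rcases hA.entries i j with h | h <;> simp [h]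

lemma val_le_sum_col (hA : MemSStar n A) {i j j' : Fin n} (hij : A i j' = 1) (hj : j ≤ j') :
    (i : ℝ) ≤ ∑ k, A k j :=
  calc (i : ℝ) ≤ ((Iic i).erase j).card := by
        have hcard := pred_card_le_card_erase (s := Iic i) (a := j)
        rw [Fin.card_Iic, Nat.add_sub_cancel] at hcard
        exact_mod_cast hcard
    _ = ∑ k ∈ (Iic i).erase j, A k j := by
        rw [sum_congr rfl fun k hk => hA.staircase i j' k j hij (mem_Iic.1 (mem_of_mem_erase hk))
          hj (ne_of_mem_erase hk)]
        simp
    _ ≤ ∑ k, A k j := sum_le_sum_of_subset_of_nonneg (subset_univ _) fun k _ _ => hA.nonneg k j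

section FullColumn

variable (hA : MemSStar n A) {c : ℕ} {j : Fin n} (hcol : ∑ k, A k j = c)
include hA hcol

lemma eq_zero_of_sum_col_eq {i k : Fin n} (hi : c < (i : ℕ)) (hk : j ≤ k) : A i k = 0 :=
  (hA.entries i k).resolve_right fun h1 => by
    have := hA.val_le_sum_col h1 hk
    rw [hcol] at this
    exact absurd (by exact_mod_cast this) hi.not_ge

lemma eq_one_of_sum_col_eq (hc : c < n) (hjc : (j : ℕ) < c) : A ⟨c, hc⟩ j = 1 := by
  refine (hA.entries _ j).resolve_left fun h0 => ?_
  have hbelow : ∀ i ∈ finGE c, A i j = 0 := fun i hi => (hA.entries i j).resolve_right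
    fun h1 => by
      have := hA.staircase i j ⟨c, hc⟩ j h1 (Fin.le_iff_val_le_val.2 (mem_finGE.1 hi)) le_rfl
        fun h => hjc.ne (congrArg Fin.val h).symm
      rw [h0] at this
      exact zero_ne_one this
  have hle := sum_le_card_sub_one (s := finLT c) (f := fun k => A k j) (mem_finLT.2 hjc)
    (hA.diag j) fun k _ => hA.le_one k j
  rw [card_finLT hc.le] at hle
  rw [← sum_finLT_add_sum_finGE c, sum_eq_zero hbelow] at hcol
  linarith

lemma eq_one_of_sum_col_eq_of_le (hc : c < n) (hjc : (j : ℕ) < c) {h k : Fin n}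
    (hh : (h : ℕ) ≤ c) (hk : k ≤ j) (hne : h ≠ k) : A h k = 1 :=
  hA.staircase _ _ h k (hA.eq_one_of_sum_col_eq hcol hc hjc) (Fin.le_iff_val_le_val.2 hh) hk hne

end FullColumn

lemma blockSum_eq_of_rowSumAt_reflComp (hA : MemSStar n A) {c k : ℕ} (hc : c ≤ n) (hk : k ≤ n)
    (hck : n ≤ c + k) (hv : rowSumAt (reflComp A) k = n - c - 1) :
    blockSum A (finLT c) (finLT (n - k)) = c * (n - k : ℕ) - (n - k : ℕ) ∧
      blockSum A (finGE c) (finGE (n - k)) = rowSumAt A c - (n - k : ℕ) := by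
  rcases hk.lt_or_eq with hk | hkn
  · set j : Fin n := (⟨k, hk⟩ : Fin n).rev with hj
    have hcol : ∑ i, A i j = c := by
      rw [rowSumAt, dif_pos hk, sum_reflComp_row A hA.diag] at hv
      linarith
    have hcn : c < n := by
      have hle := sum_le_card_sub_one (f := fun i => A i j) (mem_univ j) (hA.diag j)
        fun i _ => hA.le_one i j
      rw [card_univ, Fintype.card_fin, hcol] at hle
      exact_mod_cast (by linarith : (c : ℝ) < n)
    have hjc : (j : ℕ) < c := by simp only [hj, Fin.val_rev]; omega
    have hp : n - k = j + 1 := by simp only [hj, Fin.val_rev]; omega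
    rw [hp]
    exact ⟨blockSum_finLT_eq A hA.diag (by omega) hc fun i l hi hl hil =>
        hA.eq_one_of_sum_col_eq_of_le hcol hcn hjc hi.le (Fin.le_iff_val_le_val.2 (by omega)) hil,
      blockSum_finGE_eq A hcn (by omega)
        (fun i l hi hl => hA.eq_zero_of_sum_col_eq hcol hi (Fin.le_iff_val_le_val.2 (by omega)))
        fun l hl => hA.eq_one_of_sum_col_eq_of_le hcol hcn hjc le_rfl
          (Fin.le_iff_val_le_val.2 (by omega)) fun h => by simp [Fin.ext_iff] at h; omega⟩
  · -- past the last row `rowSumAt` is the junk value `0`, so `c = n - 1` and the blocks degenerate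
    rw [hkn, rowSumAt, dif_neg (lt_irrefl n)] at hv
    have hcn : c + 1 = n := by exact_mod_cast (by linarith : (c : ℝ) + 1 = n)
    rw [hkn, Nat.sub_self]
    exact ⟨blockSum_finLT_eq A hA.diag c.zero_le hc fun _ l _ hl => absurd hl (by omega),
      blockSum_finGE_eq A (by omega) n.zero_le (fun i _ hi _ => absurd i.isLt (by omega))
        fun l hl => absurd hl (by omega)⟩

end MemSStar

/-- Lemma 5.1 (inequality (5.1)): for `A ∈ 𝒮*(n)` with parameters `(c, v, s)` and
complement parameters `(c̄, v̄, s̄)`, if `c + c̄ ≥ n` then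
`s + s̄ ≤ -(3/4)(c+c̄)² + (n+1)(c+c̄) - (1/4)(c-c̄)² - v - c̄`,
with equality when `v̄ = n - c - 1`. -/
theorem spar_add_spar_reflComp_bound {n : ℕ} (A : Matrix (Fin n) (Fin n) ℝ)
    (hA : MemSStar n A) (h : n ≤ cpar A + cpar (reflComp A)) :
    spar A + spar (reflComp A) ≤
      -(3 / 4) * ((cpar A : ℝ) + (cpar (reflComp A) : ℝ)) ^ 2 +
        ((n : ℝ) + 1) * ((cpar A : ℝ) + (cpar (reflComp A) : ℝ)) -
        (1 / 4) * ((cpar A : ℝ) - (cpar (reflComp A) : ℝ)) ^ 2 -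
        vpar A - (cpar (reflComp A) : ℝ) ∧
    (vpar (reflComp A) = (n : ℝ) - (cpar A : ℝ) - 1 →
      spar A + spar (reflComp A) =
        -(3 / 4) * ((cpar A : ℝ) + (cpar (reflComp A) : ℝ)) ^ 2 +
          ((n : ℝ) + 1) * ((cpar A : ℝ) + (cpar (reflComp A) : ℝ)) -
          (1 / 4) * ((cpar A : ℝ) - (cpar (reflComp A) : ℝ)) ^ 2 -
          vpar A - (cpar (reflComp A) : ℝ)) := by
  have hc : cpar A ≤ n := Nat.findGreatest_le n
  have hcb : cpar (reflComp A) ≤ n := Nat.findGreatest_le n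
  have hp : ((n - cpar (reflComp A) : ℕ) : ℝ) = n - cpar (reflComp A) := Nat.cast_sub hcb
  have hsum := sumFirst_add_sumFirst_reflComp A hA.diag (cpar A) hcb
  have hB1 := blockSum_finLT_le A hA.le_one hA.diag (p := n - cpar (reflComp A)) (by omega) hc
  have hB2 := rowSumAt_sub_le_blockSum_finGE A hA.nonneg hA.le_one (cpar A)
    (Nat.sub_le n (cpar (reflComp A)))
  simp only [spar, vpar]
  rw [hp] at hB1 hB2
  refine ⟨by linarith, fun hv => ?_⟩
  obtain ⟨hB1', hB2'⟩ := hA.blockSum_eq_of_rowSumAt_reflComp hc hcb h hv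
  rw [hp] at hB1' hB2'
  linarith
end

section
/- Let $A \in \mathscr{S}^*(n)$ with parameters $(c, v, s)$ and complement parameters $(\overline{c}, \overline{v}, \overline{s})$, where either $v \ge n - \overline{c}$ or (after swapping $A$ and $\overline{A}$) this may be assumed. Then $c + \overline{c} < \frac{4n}{3} + \frac{1}{3}$. -/
/-!
Let `t = c + c̄`; only `t > n` needs an argument, and then `c, c̄ ≥ 1`, so `s, s̄ ≥ 1` because
they are positive integers. A row of `Ā` is a reflected, complemented column of `A`, so the
first `c` row sums of `A` plus the first `c̄` row sums of `Ā` count each off-diagonal position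
of `A` lying in its first `c` rows or last `c̄` columns at most once: the total is at most
`n(n-1) - (n-c)(n-c̄)`. With `s, s̄ ≥ 1` this reads `c² + c c̄ + c̄² ≤ (n+1)t - n - 2`, hence
`3t² ≤ 4(n+1)t - 4n - 8`, which fails for `t ≥ (4n+1)/3`.
-/

lemma Fin.card_filter_le_val_s14 {n c : ℕ} (hc : c ≤ n) :
    (Finset.univ.filter fun i : Fin n => c ≤ (i : ℕ)).card = n - c := by
  have := Finset.card_filter_add_card_filter_not (s := Finset.univ) fun i : Fin n => (i : ℕ) < c
  simp only [not_lt, Fin.card_filter_val_lt, Finset.card_univ, Fintype.card_fin] at this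
  omega

lemma sum_sum_ite_eq_zero_one {α : Type*} [Fintype α] [DecidableEq α] :
    ∑ i : α, ∑ j : α, (if i = j then (0 : ℝ) else 1) =
      Fintype.card α * (Fintype.card α - 1 : ℝ) := by
  simp [Finset.sum_ite, Finset.filter_ne]
  exact (Nat.eq_zero_or_pos _).symm.imp Nat.cast_pred id

namespace SStar

variable {n : ℕ}

lemma cpar_le (A : Matrix (Fin n) (Fin n) ℝ) : cpar A ≤ n :=
  Nat.findGreatest_le n

lemma reflComp_eq_zero_or_eq_one {A : Matrix (Fin n) (Fin n) ℝ}
    (h01 : ∀ i j, A i j = 0 ∨ A i j = 1) (i j : Fin n) :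
    reflComp A i j = 0 ∨ reflComp A i j = 1 := by
  by_cases h : i = j
  · simp [reflComp, h]
  · rcases h01 j.rev i.rev with h' | h' <;> simp [reflComp, h, h']

lemma sumFirst_mem_bot {A : Matrix (Fin n) (Fin n) ℝ}
    (h01 : ∀ i j, A i j = 0 ∨ A i j = 1) (c : ℕ) : sumFirst A c ∈ (⊥ : Subring ℝ) :=
  Subring.sum_mem _ fun i _ => Subring.sum_mem _ fun j _ => by
    rcases h01 i j with h | h <;> simp [h, zero_mem, one_mem]

lemma one_le_spar {A : Matrix (Fin n) (Fin n) ℝ}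
    (h01 : ∀ i j, A i j = 0 ∨ A i j = 1) (hc : 0 < cpar A) : 1 ≤ spar A := by
  have hlt : ((cpar A * (cpar A - 1) : ℕ) : ℝ) < sumFirst A (cpar A) :=
    Nat.findGreatest_of_ne_zero rfl hc.ne'
  obtain ⟨m, hm⟩ := Subring.mem_bot.1 (sumFirst_mem_bot h01 (cpar A))
  rw [← hm, ← Int.cast_natCast, Int.cast_lt] at hlt
  have hle : ((cpar A * (cpar A - 1) : ℕ) : ℝ) + 1 ≤ m := by exact_mod_cast hlt
  rw [spar, ← hm]
  push_cast [Nat.cast_sub (Nat.one_le_iff_ne_zero.2 hc.ne')] at hle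
  linarith

lemma sumFirst_eq_sum_sum (A : Matrix (Fin n) (Fin n) ℝ) (c : ℕ) :
    sumFirst A c = ∑ i : Fin n, ∑ j : Fin n, if (i : ℕ) < c then A i j else 0 := by
  rw [sumFirst, Finset.sum_filter]
  exact Finset.sum_congr rfl fun i _ => by split_ifs <;> simp

lemma sumFirst_reflComp (A : Matrix (Fin n) (Fin n) ℝ) (c' : ℕ) :
    sumFirst (reflComp A) c' =
      ∑ i : Fin n, ∑ j : Fin n, if n - c' ≤ (j : ℕ) ∧ j ≠ i then 1 - A i j else 0 := by
  rw [sumFirst_eq_sum_sum, Finset.sum_comm, ← Equiv.sum_comp Fin.revPerm]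
  refine Finset.sum_congr rfl fun i _ => ?_
  rw [← Equiv.sum_comp Fin.revPerm]
  refine Finset.sum_congr rfl fun j _ => ?_
  have hj : (j.rev : ℕ) < c' ↔ n - c' ≤ (j : ℕ) := by rw [Fin.val_rev]; omega
  simp only [reflComp, Matrix.of_apply, Fin.revPerm_apply, Fin.rev_rev, Fin.rev_inj, hj]
  by_cases hji : j = i <;> simp [hji]

lemma sumFirst_add_sumFirst_reflComp_le {A : Matrix (Fin n) (Fin n) ℝ}
    (h0 : ∀ i j, 0 ≤ A i j) (h1 : ∀ i j, A i j ≤ 1) (hdiag : ∀ i, A i i = 0)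
    {c c' : ℕ} (hc : c ≤ n) (hc' : c' ≤ n) (hcc : n ≤ c + c') :
    sumFirst A c + sumFirst (reflComp A) c' ≤ n * (n - 1 : ℝ) - (n - c) * (n - c') := by
  have hentry : ∀ i j : Fin n,
      ((if (i : ℕ) < c then A i j else 0) + if n - c' ≤ (j : ℕ) ∧ j ≠ i then 1 - A i j else 0) ≤
        (if i = j then 0 else 1) -
          (if c ≤ (i : ℕ) then 1 else 0) * (if (j : ℕ) < n - c' then 1 else 0) := by
    intro i j
    by_cases hij : i = j
    -- on the diagonal, `c ≤ i < n - c'` is impossible because `n ≤ c + c'`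
    · subst hij
      have := hdiag i
      split_ifs <;> first | omega | simp_all
    · have := h0 i j
      have := h1 i j
      split_ifs <;> first | omega | simp_all
  calc sumFirst A c + sumFirst (reflComp A) c'
      = ∑ i : Fin n, ∑ j : Fin n, ((if (i : ℕ) < c then A i j else 0) +
          if n - c' ≤ (j : ℕ) ∧ j ≠ i then 1 - A i j else 0) := by
        rw [sumFirst_reflComp, sumFirst_eq_sum_sum]
        simp only [← Finset.sum_add_distrib]
    _ ≤ ∑ i : Fin n, ∑ j : Fin n, ((if i = j then 0 else 1) -
          (if c ≤ (i : ℕ) then 1 else 0) * (if (j : ℕ) < n - c' then 1 else 0)) :=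
        Finset.sum_le_sum fun i _ => Finset.sum_le_sum fun j _ => hentry i j
    _ = n * (n - 1 : ℝ) - (n - c) * (n - c') := by
        simp only [Finset.sum_sub_distrib, ← Finset.sum_mul_sum, Finset.sum_boole,
          Fin.card_filter_le_val_s14 hc, Fin.card_filter_val_lt, sum_sum_ite_eq_zero_one, Fintype.card_fin,
          min_eq_right (Nat.sub_le n c'), Nat.cast_sub hc, Nat.cast_sub hc']

lemma add_lt_of_quadratic_le {x y m : ℝ} (hm : 0 ≤ m)
    (h : x * (x - 1) + 1 + (y * (y - 1) + 1) ≤ m * (m - 1) - (m - x) * (m - y)) :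
    x + y < 4 * m / 3 + 1 / 3 := by
  by_contra! ht
  nlinarith [sq_nonneg (x - y), sq_nonneg (x + y - 4 * m / 3 - 2 / 3),
    mul_nonneg (sub_nonneg.2 ht) hm]

end SStar

open SStar in
/-- Lemma 5.1 (inequality (5.2)): for `A ∈ 𝒮*(n)` with parameters `c = c(A)` and
`c̄ = c(Ā)`, one has `c + c̄ < 4n/3 + 1/3`. -/
theorem cpar_add_cpar_reflComp_lt {n : ℕ} (A : Matrix (Fin n) (Fin n) ℝ)
    (hA : MemSStar n A) :
    (cpar A : ℝ) + (cpar (reflComp A) : ℝ) < 4 * (n : ℝ) / 3 + 1 / 3 := by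
  have h01 := hA.entries
  have hc := cpar_le A
  have hc' := cpar_le (reflComp A)
  rcases le_or_gt (cpar A + cpar (reflComp A)) n with hle | hlt
  · have : (cpar A : ℝ) + cpar (reflComp A) ≤ n := by exact_mod_cast hle
    linarith [n.cast_nonneg (α := ℝ)]
  have hs := one_le_spar h01 (by omega : 0 < cpar A)
  have hs' := one_le_spar (reflComp_eq_zero_or_eq_one h01) (by omega : 0 < cpar (reflComp A))
  have h0 : ∀ i j, 0 ≤ A i j := fun i j => (h01 i j).elim (·.ge) (· ▸ zero_le_one)
  have h1 : ∀ i j, A i j ≤ 1 := fun i j => (h01 i j).elim (· ▸ zero_le_one) (·.le)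
  have hbound := sumFirst_add_sumFirst_reflComp_le h0 h1 hA.diag hc hc' hlt.le
  rw [spar] at hs hs'
  exact add_lt_of_quadratic_le n.cast_nonneg (by linarith)
end
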